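/- Let F = ⟨a⟩ be the infinite cyclic group and kF its group algebra over a field k. The map Δ: kF → kF ⊗ kF defined on the basis by Δ(a^{n+1}) = Σ_{i=0}^{n} a^i ⊗ a^{n−i} for n ≥ 0, Δ(e) = 0, and Δ(a^{−n}) = −Σ_{i=1}^{n} a^{−(n+1−i)} ⊗ a^{−i} for n ≥ 1, satisfies the infinitesimal bialgebra (derivation) identity Δ(xy) = (x ⊗ 1)Δ(y) + Δ(x)(1 ⊗ y) for all x, y ∈ kF. -/

import Mathlib

open scoped TensorProduct

variable (k : Type*) [Field k]

/-- The group algebra of the infinite cyclic group, with basis `aⁿ = single n 1`, `n ∈ ℤ`. -/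
abbrev GA := AddMonoidAlgebra k ℤ

/-- The value of the coproduct on the basis element `aⁿ`:
`Δ(aⁿ) = Σ_{i=0}^{n-1} aⁱ ⊗ a^{n-1-i}` for `n > 0`, `Δ(a⁰) = 0`, and
`Δ(a⁻ᵐ) = −Σ_{i=1}^{m} a^{−(m+1−i)} ⊗ a^{−i}` for `m ≥ 1`. -/
noncomputable def Dval (n : ℤ) : GA k ⊗[k] GA k :=
  if 0 < n then
    ∑ i ∈ Finset.range n.toNat,
      AddMonoidAlgebra.single (i : ℤ) (1 : k) ⊗ₜ[k]
        AddMonoidAlgebra.single (n - 1 - (i : ℤ)) (1 : k)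
  else if n < 0 then
    -∑ i ∈ Finset.range (-n).toNat,
      AddMonoidAlgebra.single (n + (i : ℤ)) (1 : k) ⊗ₜ[k]
        AddMonoidAlgebra.single (-(i : ℤ) - 1) (1 : k)
  else 0

/-- The coproduct `Δ : kF → kF ⊗ kF`, extended linearly from the basis. -/
noncomputable def Δ : GA k →ₗ[k] GA k ⊗[k] GA k :=
  Finsupp.lift (GA k ⊗[k] GA k) k ℤ (Dval k) ∘ₗ
    (AddMonoidAlgebra.coeffLinearEquiv k : GA k ≃ₗ[k] (ℤ →₀ k)).toLinearMap


/-! Both sides of the identity are bilinear in `(x, y)`, so it suffices to check it on basis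
elements `aᵐ, aⁿ`. For every `n ∈ ℤ` one has `Δ(aⁿ⁺¹) = (a ⊗ 1)Δ(aⁿ) + 1 ⊗ aⁿ`, which makes the
defect `E(m, n) = Δ(aᵐ⁺ⁿ) − (aᵐ ⊗ 1)Δ(aⁿ) − Δ(aᵐ)(1 ⊗ aⁿ)` satisfy `E(m + 1, n) = (a ⊗ 1)E(m, n)`.
Since `E(0, n) = 0` and `a ⊗ 1` is a unit, `E` vanishes identically. -/

open AddMonoidAlgebra TensorProduct Finset

namespace AddMonoidAlgebra

lemma single_tmul_one_mul_single_tmul {R G : Type*} [CommSemiring R] [AddMonoid G]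
    (m m' : G) (y : AddMonoidAlgebra R G) :
    (single m (1 : R) ⊗ₜ[R] (1 : AddMonoidAlgebra R G)) * (single m' 1 ⊗ₜ[R] y) =
      single (m + m') 1 ⊗ₜ[R] y := by
  rw [Algebra.TensorProduct.tmul_mul_tmul, single_mul_single, one_mul, one_mul]

lemma isUnit_single_one_tmul_one {R G : Type*} [CommSemiring R] [AddCommGroup G] (g : G) :
    IsUnit ((single g 1 : AddMonoidAlgebra R G) ⊗ₜ[R] (1 : AddMonoidAlgebra R G)) :=
  .of_mul_eq_one (single (-g) 1 ⊗ₜ[R] 1) <| by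
    rw [single_tmul_one_mul_single_tmul, add_neg_cancel, ← one_def, Algebra.TensorProduct.one_def]

theorem derivation_identity_of_single {R G : Type*} [CommSemiring R] [AddMonoid G]
    (D : AddMonoidAlgebra R G →ₗ[R] AddMonoidAlgebra R G ⊗[R] AddMonoidAlgebra R G)
    (h : ∀ m n : G, D (single m 1 * single n 1) =
      (single m 1 ⊗ₜ 1) * D (single n 1) + D (single m 1) * (1 ⊗ₜ single n 1))
    (x y : AddMonoidAlgebra R G) :
    D (x * y) = (x ⊗ₜ 1) * D y + D x * (1 ⊗ₜ y) := by
  let T := AddMonoidAlgebra R G ⊗[R] AddMonoidAlgebra R G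
  have h_bilin : (LinearMap.mul R _).compr₂ D =
      (LinearMap.mul R T).compl₁₂ Algebra.TensorProduct.includeLeft.toLinearMap D +
        (LinearMap.mul R T).compl₁₂ D Algebra.TensorProduct.includeRight.toLinearMap :=
    LinearMap.ext_basis (basis G R) (basis G R) fun m n => by simpa using h m n
  simpa using LinearMap.congr_fun₂ h_bilin x y

end AddMonoidAlgebra

lemma Δ_single_one (n : ℤ) : Δ k (single n 1) = Dval k n := by
  simp only [Δ, LinearMap.comp_apply, LinearEquiv.coe_coe, coeffLinearEquiv_apply, coeff_single,
    Finsupp.lift_apply, zero_smul, Finsupp.sum_single_index, one_smul]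

lemma Dval_natCast (n : ℕ) :
    Dval k n = ∑ i ∈ range n, single (i : ℤ) (1 : k) ⊗ₜ[k] single ((n : ℤ) - 1 - i) (1 : k) := by
  rcases n.eq_zero_or_pos with rfl | hn
  · simp [Dval]
  · simp [Dval, hn]

lemma Dval_neg_natCast (n : ℕ) :
    Dval k (-n) =
      -∑ i ∈ range n, single ((i : ℤ) - n) (1 : k) ⊗ₜ[k] single (-(i : ℤ) - 1) (1 : k) := by
  rcases n.eq_zero_or_pos with rfl | hn
  · simp [Dval]
  · simp [Dval, hn, neg_add_eq_sub]

lemma Dval_add_one (n : ℤ) :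
    Dval k (n + 1) = (single 1 1 ⊗ₜ[k] 1) * Dval k n + 1 ⊗ₜ[k] single n (1 : k) := by
  rcases n with m | m
  · rw [Int.ofNat_eq_natCast, ← Nat.cast_succ, Dval_natCast, Dval_natCast, sum_range_succ',
      mul_sum]
    simp only [single_tmul_one_mul_single_tmul]
    congr 1
    · refine sum_congr rfl fun i _ => ?_
      congr 2 <;> push_cast <;> ring
    · rw [Nat.cast_zero, sub_zero, Nat.cast_succ, add_sub_cancel_right, ← one_def]
  · rw [Int.negSucc_eq, show -((m : ℤ) + 1) + 1 = -m by ring,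
      show (m : ℤ) + 1 = (m + 1 : ℕ) by simp, Dval_neg_natCast, Dval_neg_natCast, sum_range_succ]
    have h_sum : (single 1 1 ⊗ₜ[k] 1) * ∑ i ∈ range m,
        single ((i : ℤ) - (m + 1 : ℕ)) (1 : k) ⊗ₜ[k] single (-(i : ℤ) - 1) (1 : k) =
        ∑ i ∈ range m, single ((i : ℤ) - m) (1 : k) ⊗ₜ[k] single (-(i : ℤ) - 1) (1 : k) := by
      rw [mul_sum]
      refine sum_congr rfl fun i _ => ?_
      rw [single_tmul_one_mul_single_tmul]
      congr 2
      push_cast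
      ring
    have h_last : (single 1 1 ⊗ₜ[k] 1) *
        (single ((m : ℤ) - (m + 1 : ℕ)) (1 : k) ⊗ₜ[k] single (-(m : ℤ) - 1) (1 : k)) =
        1 ⊗ₜ[k] single (-((m + 1 : ℕ) : ℤ)) (1 : k) := by
      rw [single_tmul_one_mul_single_tmul, one_def]
      congr 2 <;> push_cast <;> ring
    -- `rw [mul_neg]` fails here: the negation in `Dval` is the tensor product's module negation,
    -- equal to the ring's only up to unfolding, which `ring` sees through.
    linear_combination h_sum + h_last

noncomputable def leibnizDefect (m n : ℤ) : GA k ⊗[k] GA k :=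
  Dval k (m + n) - (single m 1 ⊗ₜ[k] 1) * Dval k n - Dval k m * (1 ⊗ₜ[k] single n 1)

lemma leibnizDefect_zero_left (n : ℤ) : leibnizDefect k 0 n = 0 := by
  rw [leibnizDefect, zero_add, ← one_def, ← Algebra.TensorProduct.one_def, one_mul, sub_self,
    show Dval k 0 = 0 by simp [Dval], zero_mul, sub_zero]

lemma leibnizDefect_add_one_left (m n : ℤ) :
    leibnizDefect k (m + 1) n = (single 1 1 ⊗ₜ[k] 1) * leibnizDefect k m n := by
  have h_left : (single 1 (1 : k) ⊗ₜ[k] (1 : GA k)) * (single m 1 ⊗ₜ[k] 1) =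
      single (m + 1) 1 ⊗ₜ[k] 1 := by
    rw [single_tmul_one_mul_single_tmul, add_comm]
  have h_right : ((1 : GA k) ⊗ₜ[k] single m (1 : k)) * (1 ⊗ₜ[k] single n 1) =
      1 ⊗ₜ[k] single (m + n) 1 := by
    rw [Algebra.TensorProduct.tmul_mul_tmul, single_mul_single, one_mul, one_mul]
  rw [leibnizDefect, leibnizDefect, add_right_comm, Dval_add_one, Dval_add_one]
  linear_combination Dval k n * h_left - h_right

lemma leibnizDefect_eq_zero (m n : ℤ) : leibnizDefect k m n = 0 := by
  induction m using Int.induction_on with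
  | zero => exact leibnizDefect_zero_left k n
  | succ m ih => rw [leibnizDefect_add_one_left, ih, mul_zero]
  | pred m ih =>
    rw [← sub_add_cancel (-(m : ℤ)) 1, leibnizDefect_add_one_left] at ih
    exact (isUnit_single_one_tmul_one 1).mul_right_eq_zero.mp ih

lemma Dval_add (m n : ℤ) :
    Dval k (m + n) = (single m 1 ⊗ₜ[k] 1) * Dval k n + Dval k m * (1 ⊗ₜ[k] single n 1) := by
  rw [← sub_eq_zero, ← sub_sub]
  exact leibnizDefect_eq_zero k m n

/-- `Δ` satisfies the infinitesimal-bialgebra (derivation) identity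
`Δ(xy) = (x ⊗ 1)Δ(y) + Δ(x)(1 ⊗ y)` for all `x, y ∈ kF`. -/
theorem cyclicGroupAlgebra_coproduct_derivation (x y : GA k) :
    Δ k (x * y) =
      (x ⊗ₜ[k] (1 : GA k)) * Δ k y + Δ k x * ((1 : GA k) ⊗ₜ[k] y) :=
  derivation_identity_of_single (Δ k) (fun m n => by
    rw [single_mul_single, one_mul, Δ_single_one, Δ_single_one, Δ_single_one, Dval_add]) x y
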